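/- There is an absolute constant C > 0 with the following property: for every α ∈ (0,1) and every U ∈ 𝒰 that is differentiable on (0,π) with t·U'(t) ≤ α·U(t) for all t ∈ (0,π), the conjugate function V satisfies |V(t)| ≤ C·(√α/(1 − α))·U(t) for all t ∈ (0, π/2]. -/

import Mathlib

open MeasureTheory Filter Set

noncomputable section

noncomputable def hU (U : ℝ → ℝ) (t : ℝ) : ℝ := ∫ x in t..Real.pi, U x / x ^ 2

def ClassU (U : ℝ → ℝ) : Prop :=
  Continuous U ∧ (∀ t, U (-t) = U t) ∧ Function.Periodic U (2 * Real.pi) ∧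
  U 0 = 0 ∧ MonotoneOn U (Set.Icc 0 Real.pi) ∧
  (∀ t, 0 < t → t ≤ Real.pi → 0 < U t) ∧
  Tendsto (fun t => hU U t) (nhdsWithin 0 (Set.Ioi 0)) atTop

/-- The conjugate function of `U`. -/
noncomputable def conjFun (U : ℝ → ℝ) (t : ℝ) : ℝ :=
  (1 / (2 * Real.pi)) * (∫ x in (0 : ℝ)..t, (U (t - x) - U (t + x)) / Real.tan (x / 2)) -
  (1 / (2 * Real.pi)) * (∫ x in t..Real.pi, (U (x + t) - U (x - t)) / Real.tan (x / 2))

/-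
The hypothesis `t U' ≤ α U` makes `U x / x ^ α` nonincreasing, so by Bernoulli's inequality
`U b - U a ≤ α U a (b - a) / a`. Folding the integral by evenness,
`V t = -(1/2π) ∫₀^π (U (x + t) - U (x - t)) cot (x / 2) dx`, whose integrand is
`O(α U t / |x - t|)` for `x < 2t`, `O(U t / t)` near `t` and `O(α U t · t^(1-α) x^(α-2))` beyond
`2t`. Splitting `(0, π)` at `t ± s` and `2t` gives
`|V t| ≲ (α log (t / s) + s / t + α / (1 - α)) U t`, and `s = √α t / 2` balances the first two
terms.
-/

open Real

theorem antitoneOn_div_rpow_of_mul_deriv_le {f f' : ℝ → ℝ} {α a b : ℝ} (ha : 0 < a)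
    (hf : ContinuousOn f (Icc a b)) (hd : ∀ x ∈ Ioo a b, HasDerivAt f (f' x) x)
    (hg : ∀ x ∈ Ioo a b, x * f' x ≤ α * f x) :
    AntitoneOn (fun x => f x / x ^ α) (Icc a b) := by
  have hderiv : ∀ x ∈ Ioo a b, HasDerivAt (fun x => f x / x ^ α)
      ((f' x * x ^ α - f x * (α * x ^ (α - 1))) / (x ^ α) ^ 2) x := fun x hx =>
    (hd x hx).div (hasDerivAt_rpow_const (Or.inl (ha.trans hx.1).ne'))
      (rpow_pos_of_pos (ha.trans hx.1) α).ne'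
  refine antitoneOn_of_deriv_nonpos (convex_Icc a b) ?_ ?_ ?_
  · exact hf.div (continuousOn_id.rpow_const fun x hx => Or.inl (ha.trans_le hx.1).ne')
      fun x hx => (rpow_pos_of_pos (ha.trans_le hx.1) α).ne'
  · rw [interior_Icc]
    exact fun x hx => (hderiv x hx).differentiableAt.differentiableWithinAt
  · rw [interior_Icc]
    intro x hx
    have hx0 : 0 < x := ha.trans hx.1
    rw [(hderiv x hx).deriv]
    refine div_nonpos_of_nonpos_of_nonneg ?_ (sq_nonneg _)
    have hpow : x ^ α = x ^ (α - 1) * x := by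
      rw [← rpow_add_one hx0.ne', sub_add_cancel]
    calc f' x * x ^ α - f x * (α * x ^ (α - 1)) = x ^ (α - 1) * (x * f' x - α * f x) := by
          rw [hpow]; ring
      _ ≤ 0 := mul_nonpos_of_nonneg_of_nonpos (rpow_nonneg hx0.le _) (by linarith [hg x hx])

theorem integral_const_div_of_pos {a b : ℝ} (c : ℝ) (ha : 0 < a) (hb : 0 < b) :
    ∫ x in a..b, c / x = c * log (b / a) := by
  simp_rw [div_eq_mul_inv c, intervalIntegral.integral_const_mul, integral_inv_of_pos ha hb]

theorem integral_rpow_le_of_lt_neg_one {a b r : ℝ} (ha : 0 < a) (hab : a ≤ b) (hr : r < -1) :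
    ∫ x in a..b, x ^ r ≤ a ^ (r + 1) / -(r + 1) := by
  rw [integral_rpow (Or.inr ⟨hr.ne, fun h => by linarith [(uIcc_of_le hab ▸ h).1]⟩),
    ← neg_div_neg_eq, neg_sub]
  gcongr
  · linarith
  · linarith [rpow_nonneg (ha.le.trans hab) (r + 1)]

theorem abs_intervalIntegral_le_of_abs_le {f g : ℝ → ℝ} {a b : ℝ} (hab : a ≤ b)
    (hf : AEStronglyMeasurable f volume) (hg : IntervalIntegrable g volume a b)
    (h : ∀ x ∈ Ioo a b, |f x| ≤ g x) :
    IntervalIntegrable f volume a b ∧ |∫ x in a..b, f x| ≤ ∫ x in a..b, g x := by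
  have hae : ∀ᵐ x, x ∈ Ioc a b → ‖f x‖ ≤ g x := by
    filter_upwards [(Ioo_ae_eq_Ioc (a := a) (b := b) (μ := volume)).mem_iff] with x hx hxb
    exact h x (hx.2 hxb)
  refine ⟨hg.mono_fun' hf.restrict ?_, intervalIntegral.norm_integral_le_of_norm_le hab hae hg⟩
  rw [uIoc_of_le hab, EventuallyLE, ae_restrict_iff' measurableSet_Ioc]
  exact hae

theorem le_mul_div_rpow_of_antitoneOn {f : ℝ → ℝ} {s : Set ℝ} {α a b : ℝ}
    (hf : AntitoneOn (fun x => f x / x ^ α) s) (ha : 0 < a) (has : a ∈ s) (hbs : b ∈ s)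
    (hab : a ≤ b) : f b ≤ f a * (b / a) ^ α := by
  have hb : 0 < b := ha.trans_le hab
  have := hf has hbs hab
  rw [div_le_div_iff₀ (rpow_pos_of_pos hb α) (rpow_pos_of_pos ha α)] at this
  rw [div_rpow hb.le ha.le, mul_div_assoc', le_div_iff₀ (rpow_pos_of_pos ha α)]
  linarith

def conjIntegrand (U : ℝ → ℝ) (t x : ℝ) : ℝ := (U (x + t) - U (x - t)) / tan (x / 2)

theorem measurable_conjIntegrand {U : ℝ → ℝ} (hU : Continuous U) (t : ℝ) :
    Measurable (conjIntegrand U t) := by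
  have : Measurable U := hU.measurable
  unfold conjIntegrand
  simp_rw [tan_eq_sin_div_cos]
  fun_prop

namespace ClassU

variable {U : ℝ → ℝ} {α t x s : ℝ}

protected theorem continuous (hU : ClassU U) : Continuous U := hU.1

theorem apply_neg (hU : ClassU U) (s : ℝ) : U (-s) = U s := hU.2.1 s

theorem monotoneOn (hU : ClassU U) : MonotoneOn U (Icc 0 π) := hU.2.2.2.2.1

theorem nonneg (hU : ClassU U) (h0 : 0 ≤ s) (hπ : s ≤ π) : 0 ≤ U s :=
  hU.2.2.2.1 ▸ hU.monotoneOn ⟨le_rfl, pi_pos.le⟩ ⟨h0, hπ⟩ h0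

theorem apply_abs (hU : ClassU U) (s : ℝ) : U |s| = U s := by
  rcases abs_choice s with h | h <;> rw [h]
  exact hU.apply_neg s

theorem apply_two_pi_sub (hU : ClassU U) (s : ℝ) : U (2 * π - s) = U s := by
  rw [← hU.apply_neg, ← hU.2.2.1]
  ring_nf

theorem apply_le_apply (hU : ClassU U) {a b : ℝ} (ha : 0 ≤ a) (hab : a ≤ b)
    (hab' : a + b ≤ 2 * π) : U a ≤ U b := by
  rcases le_total b π with hb | hb
  · exact hU.monotoneOn ⟨ha, hab.trans hb⟩ ⟨ha.trans hab, hb⟩ hab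
  · rw [← hU.apply_two_pi_sub b]
    exact hU.monotoneOn ⟨ha, by linarith⟩ ⟨by linarith, by linarith⟩ (by linarith)

theorem antitoneOn_div_rpow {U' : ℝ → ℝ} (hU : ClassU U)
    (hd : ∀ x ∈ Ioo 0 π, HasDerivAt U (U' x) x) (hg : ∀ x ∈ Ioo 0 π, x * U' x ≤ α * U x) :
    AntitoneOn (fun x => U x / x ^ α) (Ioc 0 π) := by
  intro a ha b hb hab
  have hsub : Ioo a π ⊆ Ioo 0 π := Ioo_subset_Ioo_left ha.1.le
  exact antitoneOn_div_rpow_of_mul_deriv_le ha.1 hU.continuous.continuousOn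
    (fun x hx => hd x (hsub hx)) (fun x hx => hg x (hsub hx))
    ⟨le_rfl, ha.2⟩ ⟨hab, hb.2⟩ hab

theorem sub_le (hU : ClassU U) (hanti : AntitoneOn (fun x => U x / x ^ α) (Ioc 0 π))
    (hα0 : 0 ≤ α) (hα1 : α ≤ 1) {a b : ℝ} (ha : 0 < a) (haπ : a ≤ π) (hab : a ≤ b)
    (hb : b ≤ 2 * π) : U b - U a ≤ α * U a * ((b - a) / a) := by
  have hUa : 0 ≤ U a := hU.nonneg ha.le haπ
  have key : ∀ c, a ≤ c → c ≤ π → U c - U a ≤ α * U a * ((c - a) / a) := by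
    intro c hac hc
    have hbern : (c / a) ^ α ≤ 1 + α * ((c - a) / a) := by
      have h := rpow_one_add_le_one_add_mul_self
        (by linarith [div_nonneg (sub_nonneg.2 hac) ha.le] : -1 ≤ (c - a) / a) hα0 hα1
      rwa [one_add_div ha.ne', add_sub_cancel] at h
    have := le_mul_div_rpow_of_antitoneOn hanti ha ⟨ha, haπ⟩ ⟨ha.trans_le hac, hc⟩ hac
    nlinarith [mul_le_mul_of_nonneg_left hbern hUa]
  rcases le_total b π with hbπ | hπb
  · exact key b hab hbπ
  · have hUb : U b ≤ U π := by
      rw [← hU.apply_two_pi_sub b]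
      exact hU.monotoneOn ⟨by linarith, by linarith⟩ ⟨pi_pos.le, le_rfl⟩ (by linarith)
    have hmono : α * U a * ((π - a) / a) ≤ α * U a * ((b - a) / a) := by gcongr
    linarith [key π haπ le_rfl]

theorem conjFun_eq (hU : ClassU U) (ht0 : 0 ≤ t) (htπ : t ≤ π)
    (hint : IntervalIntegrable (conjIntegrand U t) volume 0 π) :
    conjFun U t = -(1 / (2 * π)) * ∫ x in 0..π, conjIntegrand U t x := by
  have hfold : ∫ x in (0 : ℝ)..t, (U (t - x) - U (t + x)) / tan (x / 2) =
      -∫ x in (0 : ℝ)..t, conjIntegrand U t x := by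
    rw [← intervalIntegral.integral_neg]
    congr 1 with x
    rw [conjIntegrand, ← hU.apply_neg (x - t), neg_sub, add_comm, ← neg_div, neg_sub]
  have htmem : t ∈ uIcc 0 π := by rw [uIcc_of_le pi_pos.le]; exact ⟨ht0, htπ⟩
  rw [conjFun, hfold, ← intervalIntegral.integral_add_adjacent_intervals
    (hint.mono_set (uIcc_subset_uIcc_left htmem))
    (hint.mono_set (uIcc_subset_uIcc_right htmem))]
  simp only [conjIntegrand]
  ring

theorem apply_sub_le_apply_add (hU : ClassU U) (ht0 : 0 ≤ t) (htπ : t ≤ π) (hx0 : 0 ≤ x)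
    (hxπ : x ≤ π) : U (x - t) ≤ U (x + t) := by
  rw [← hU.apply_abs]
  exact hU.apply_le_apply (abs_nonneg _) (abs_sub_le_iff.2 ⟨by linarith, by linarith⟩)
    (by rcases abs_cases (x - t) with ⟨h, -⟩ | ⟨h, -⟩ <;> linarith)

theorem abs_conjIntegrand_le (hU : ClassU U) (ht0 : 0 ≤ t) (htπ : t ≤ π) (hx0 : 0 < x)
    (hxπ : x < π) : |conjIntegrand U t x| ≤ 2 * (U (x + t) - U (x - t)) / x := by
  have hD : 0 ≤ U (x + t) - U (x - t) :=
    sub_nonneg.2 (hU.apply_sub_le_apply_add ht0 htπ hx0.le hxπ.le)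
  have htan : x / 2 < tan (x / 2) := lt_tan (by linarith) (by linarith)
  rw [conjIntegrand, abs_div, abs_of_nonneg hD, abs_of_pos (by linarith)]
  calc (U (x + t) - U (x - t)) / tan (x / 2) ≤ (U (x + t) - U (x - t)) / (x / 2) :=
        div_le_div_of_nonneg_left hD (by linarith) htan.le
    _ = 2 * (U (x + t) - U (x - t)) / x := by field_simp

theorem abs_conjIntegrand_le_of_ne (hU : ClassU U)
    (hanti : AntitoneOn (fun x => U x / x ^ α) (Ioc 0 π)) (hα0 : 0 ≤ α) (hα1 : α ≤ 1)
    (ht0 : 0 < t) (ht : t ≤ π / 2) (hx0 : 0 < x) (hxπ : x < π) (hxt : x ≠ t) :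
    |conjIntegrand U t x| ≤ 4 * α * min x t * U (x - t) / (x * |x - t|) := by
  have ha : 0 < |x - t| := abs_pos.2 (sub_ne_zero.2 hxt)
  have hD := hU.sub_le hanti hα0 hα1 (b := x + t) ha
    (abs_sub_le_iff.2 ⟨by linarith, by linarith⟩) (abs_sub_le_iff.2 ⟨by linarith, by linarith⟩)
    (by linarith)
  rw [hU.apply_abs] at hD
  have hmin : x + t - |x - t| = 2 * min x t := by
    rcases le_total x t with h | h
    · rw [abs_of_nonpos (by linarith), min_eq_left h]; ring
    · rw [abs_of_nonneg (by linarith), min_eq_right h]; ring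
  calc |conjIntegrand U t x| ≤ 2 * (U (x + t) - U (x - t)) / x :=
        hU.abs_conjIntegrand_le ht0.le (by linarith) hx0 hxπ
    _ ≤ 2 * (α * U (x - t) * ((x + t - |x - t|) / |x - t|)) / x := by gcongr
    _ = 4 * α * min x t * U (x - t) / (x * |x - t|) := by
        rw [hmin]; field_simp; ring

theorem abs_conjIntegrand_le_div_abs_sub (hU : ClassU U)
    (hanti : AntitoneOn (fun x => U x / x ^ α) (Ioc 0 π)) (hα0 : 0 ≤ α) (hα1 : α ≤ 1)
    (ht0 : 0 < t) (ht : t ≤ π / 2) (hx0 : 0 < x) (hx : x < 2 * t) (hxt : x ≠ t) :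
    |conjIntegrand U t x| ≤ 4 * α * U t / |x - t| := by
  have hxt_le : |x - t| ≤ t := abs_sub_le_iff.2 ⟨by linarith, by linarith⟩
  have hUxt : U (x - t) ≤ U t := by
    rw [← hU.apply_abs]
    exact hU.apply_le_apply (abs_nonneg _) hxt_le (by linarith)
  have hUxt0 : 0 ≤ U (x - t) := hU.apply_abs (x - t) ▸ hU.nonneg (abs_nonneg _) (by linarith)
  calc |conjIntegrand U t x| ≤ 4 * α * min x t * U (x - t) / (x * |x - t|) :=
        hU.abs_conjIntegrand_le_of_ne hanti hα0 hα1 ht0 ht hx0 (by linarith) hxt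
    _ ≤ 4 * α * x * U t / (x * |x - t|) := by gcongr; exact min_le_left x t
    _ = 4 * α * U t / |x - t| := by field_simp

theorem abs_conjIntegrand_le_rpow (hU : ClassU U)
    (hanti : AntitoneOn (fun x => U x / x ^ α) (Ioc 0 π)) (hα0 : 0 ≤ α) (hα1 : α ≤ 1)
    (ht0 : 0 < t) (ht : t ≤ π / 2) (hx : 2 * t ≤ x) (hxπ : x < π) :
    |conjIntegrand U t x| ≤ 8 * α * U t * t ^ (1 - α) * x ^ (α - 2) := by
  have hx0 : 0 < x := by linarith
  have hUx : U (x - t) ≤ U t * (x / t) ^ α :=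
    (hU.monotoneOn ⟨by linarith, by linarith⟩ ⟨hx0.le, hxπ.le⟩ (by linarith)).trans
      (le_mul_div_rpow_of_antitoneOn hanti ht0 ⟨ht0, by linarith⟩ ⟨hx0, hxπ.le⟩ (by linarith))
  have hpow : t * (x / t) ^ α / x ^ 2 = t ^ (1 - α) * x ^ (α - 2) := by
    rw [div_rpow hx0.le ht0.le, rpow_sub ht0, rpow_sub hx0, rpow_one, rpow_two]
    field_simp
  calc |conjIntegrand U t x| ≤ 4 * α * min x t * U (x - t) / (x * |x - t|) :=
        hU.abs_conjIntegrand_le_of_ne hanti hα0 hα1 ht0 ht hx0 hxπ (by linarith)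
    _ = 4 * α * t * U (x - t) / (x * (x - t)) := by
        rw [min_eq_right (by linarith), abs_of_pos (by linarith)]
    _ ≤ 4 * α * t * (U t * (x / t) ^ α) / (x * (x / 2)) := by
        gcongr
        · exact mul_nonneg (mul_nonneg (mul_nonneg (by norm_num) hα0) ht0.le)
            (mul_nonneg (hU.nonneg ht0.le (by linarith)) (rpow_nonneg (by positivity) _))
        · linarith
    _ = 8 * α * U t * (t * (x / t) ^ α / x ^ 2) := by field_simp; ring
    _ = 8 * α * U t * t ^ (1 - α) * x ^ (α - 2) := by rw [hpow]; ring

theorem abs_conjIntegrand_le_of_mem_Ioo (hU : ClassU U)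
    (hanti : AntitoneOn (fun x => U x / x ^ α) (Ioc 0 π)) (hα0 : 0 ≤ α) (hα1 : α ≤ 1)
    (ht0 : 0 < t) (ht : t ≤ π / 2) (hx : x ∈ Ioo (t / 2) (2 * t)) :
    |conjIntegrand U t x| ≤ 12 * U t / t := by
  obtain ⟨hx1, hx2⟩ := hx
  have hUt : 0 ≤ U t := hU.nonneg ht0.le (by linarith)
  have hUxt0 : 0 ≤ U (x - t) := hU.apply_abs (x - t) ▸ hU.nonneg (abs_nonneg _)
    (abs_sub_le_iff.2 ⟨by linarith, by linarith⟩)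
  have hgrowth := hU.sub_le hanti hα0 hα1 (b := x + t) ht0 (by linarith) (by linarith)
    (by linarith)
  have hUxt : U (x + t) ≤ 3 * U t := by
    have hratio : (x + t - t) / t ≤ 2 := by rw [div_le_iff₀ ht0]; linarith
    have : α * U t * ((x + t - t) / t) ≤ 1 * U t * 2 :=
      mul_le_mul (mul_le_mul_of_nonneg_right hα1 hUt) hratio
        (div_nonneg (by linarith) ht0.le) (by linarith)
    linarith
  calc |conjIntegrand U t x| ≤ 2 * (U (x + t) - U (x - t)) / x :=
        hU.abs_conjIntegrand_le ht0.le (by linarith) (by linarith) (by linarith)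
    _ ≤ 2 * (3 * U t) / (t / 2) := by gcongr; linarith
    _ = 12 * U t / t := by ring

theorem abs_integral_conjIntegrand_le_left (hU : ClassU U)
    (hanti : AntitoneOn (fun x => U x / x ^ α) (Ioc 0 π)) (hα0 : 0 ≤ α) (hα1 : α ≤ 1)
    (ht0 : 0 < t) (ht : t ≤ π / 2) (hs0 : 0 < s) (hst : s ≤ t) :
    IntervalIntegrable (conjIntegrand U t) volume 0 (t - s) ∧
      |∫ x in 0..t - s, conjIntegrand U t x| ≤ 4 * α * U t * log (t / s) := by
  have hcont : ContinuousOn (fun x => 4 * α * U t / (t - x)) (uIcc 0 (t - s)) := by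
    rw [uIcc_of_le (by linarith)]
    exact continuousOn_const.div (continuousOn_const.sub continuousOn_id)
      fun x hx => by linarith [hx.2]
  have hbound : ∫ x in 0..t - s, 4 * α * U t / (t - x) = 4 * α * U t * log (t / s) := by
    rw [intervalIntegral.integral_comp_sub_left (fun u => 4 * α * U t / u), sub_sub_cancel,
      sub_zero, integral_const_div_of_pos _ hs0 ht0]
  rw [← hbound]
  refine abs_intervalIntegral_le_of_abs_le (by linarith)
    (measurable_conjIntegrand hU.continuous t).aestronglyMeasurable hcont.intervalIntegrable
    fun x hx => ?_
  have hxt : x < t := by linarith [hx.2]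
  have := hU.abs_conjIntegrand_le_div_abs_sub hanti hα0 hα1 ht0 ht hx.1 (by linarith) hxt.ne
  rwa [abs_of_neg (sub_neg.2 hxt), neg_sub] at this

theorem abs_integral_conjIntegrand_le_right (hU : ClassU U)
    (hanti : AntitoneOn (fun x => U x / x ^ α) (Ioc 0 π)) (hα0 : 0 ≤ α) (hα1 : α ≤ 1)
    (ht0 : 0 < t) (ht : t ≤ π / 2) (hs0 : 0 < s) (hst : s ≤ t) :
    IntervalIntegrable (conjIntegrand U t) volume (t + s) (2 * t) ∧
      |∫ x in t + s..2 * t, conjIntegrand U t x| ≤ 4 * α * U t * log (t / s) := by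
  have hcont : ContinuousOn (fun x => 4 * α * U t / (x - t)) (uIcc (t + s) (2 * t)) := by
    rw [uIcc_of_le (by linarith)]
    exact continuousOn_const.div (continuousOn_id.sub continuousOn_const)
      fun x hx => by linarith [hx.1]
  have hbound : ∫ x in t + s..2 * t, 4 * α * U t / (x - t) = 4 * α * U t * log (t / s) := by
    rw [intervalIntegral.integral_comp_sub_right (fun u => 4 * α * U t / u),
      add_sub_cancel_left, two_mul, add_sub_cancel_right, integral_const_div_of_pos _ hs0 ht0]
  rw [← hbound]
  refine abs_intervalIntegral_le_of_abs_le (by linarith)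
    (measurable_conjIntegrand hU.continuous t).aestronglyMeasurable hcont.intervalIntegrable
    fun x hx => ?_
  have htx : t < x := by linarith [hx.1]
  have := hU.abs_conjIntegrand_le_div_abs_sub hanti hα0 hα1 ht0 ht (by linarith) hx.2 htx.ne'
  rwa [abs_of_pos (sub_pos.2 htx)] at this

theorem abs_integral_conjIntegrand_le_middle (hU : ClassU U)
    (hanti : AntitoneOn (fun x => U x / x ^ α) (Ioc 0 π)) (hα0 : 0 ≤ α) (hα1 : α ≤ 1)
    (ht0 : 0 < t) (ht : t ≤ π / 2) (hs0 : 0 < s) (hst : s ≤ t / 2) :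
    IntervalIntegrable (conjIntegrand U t) volume (t - s) (t + s) ∧
      |∫ x in t - s..t + s, conjIntegrand U t x| ≤ 24 * s * U t / t := by
  have hbound : ∫ _ in t - s..t + s, 12 * U t / t = 24 * s * U t / t := by
    rw [intervalIntegral.integral_const, smul_eq_mul]
    ring
  rw [← hbound]
  refine abs_intervalIntegral_le_of_abs_le (by linarith)
    (measurable_conjIntegrand hU.continuous t).aestronglyMeasurable intervalIntegrable_const
    fun x hx => ?_
  exact hU.abs_conjIntegrand_le_of_mem_Ioo hanti hα0 hα1 ht0 ht
    ⟨by linarith [hx.1], by linarith [hx.2]⟩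

theorem abs_integral_conjIntegrand_le_tail (hU : ClassU U)
    (hanti : AntitoneOn (fun x => U x / x ^ α) (Ioc 0 π)) (hα0 : 0 ≤ α) (hα1 : α < 1)
    (ht0 : 0 < t) (ht : t ≤ π / 2) :
    IntervalIntegrable (conjIntegrand U t) volume (2 * t) π ∧
      |∫ x in 2 * t..π, conjIntegrand U t x| ≤ 8 * α * U t / (1 - α) := by
  set K := 8 * α * U t * t ^ (1 - α)
  have hK : 0 ≤ K := mul_nonneg (mul_nonneg (mul_nonneg (by norm_num) hα0)
    (hU.nonneg ht0.le (by linarith))) (rpow_nonneg ht0.le _)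
  have hpow : t ^ (1 - α) * (2 * t) ^ (α - 2 + 1) ≤ 1 := by
    rw [mul_rpow (by norm_num) ht0.le, mul_left_comm, ← rpow_add ht0,
      show 1 - α + (α - 2 + 1) = 0 by ring, rpow_zero, mul_one]
    exact rpow_le_one_of_one_le_of_nonpos (by norm_num) (by linarith)
  have hint : IntervalIntegrable (fun x => K * x ^ (α - 2)) volume (2 * t) π :=
    (intervalIntegral.intervalIntegrable_rpow
      (Or.inr fun h => by linarith [(uIcc_of_le (by linarith : 2 * t ≤ π) ▸ h).1])).const_mul K
  obtain ⟨hint', habs⟩ := abs_intervalIntegral_le_of_abs_le (by linarith)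
    (measurable_conjIntegrand hU.continuous t).aestronglyMeasurable hint
    fun x hx => hU.abs_conjIntegrand_le_rpow hanti hα0 hα1.le ht0 ht hx.1.le hx.2
  refine ⟨hint', habs.trans ?_⟩
  rw [intervalIntegral.integral_const_mul]
  calc K * ∫ x in 2 * t..π, x ^ (α - 2)
      ≤ K * ((2 * t) ^ (α - 2 + 1) / -(α - 2 + 1)) := by
        gcongr
        exact integral_rpow_le_of_lt_neg_one (by linarith) (by linarith) (by linarith)
    _ = 8 * α * U t * (t ^ (1 - α) * (2 * t) ^ (α - 2 + 1)) / (1 - α) := by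
        rw [show -(α - 2 + 1) = 1 - α by ring]
        ring
    _ ≤ 8 * α * U t * 1 / (1 - α) := by
        gcongr
        exact mul_nonneg (mul_nonneg (by norm_num) hα0) (hU.nonneg ht0.le (by linarith))
    _ = 8 * α * U t / (1 - α) := by rw [mul_one]

theorem abs_integral_conjIntegrand_le (hU : ClassU U)
    (hanti : AntitoneOn (fun x => U x / x ^ α) (Ioc 0 π)) (hα0 : 0 ≤ α) (hα1 : α < 1)
    (ht0 : 0 < t) (ht : t ≤ π / 2) (hs0 : 0 < s) (hst : s ≤ t / 2) :
    IntervalIntegrable (conjIntegrand U t) volume 0 π ∧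
      |∫ x in 0..π, conjIntegrand U t x| ≤
        8 * α * U t * log (t / s) + 24 * s * U t / t + 8 * α * U t / (1 - α) := by
  obtain ⟨i₁, h₁⟩ :=
    hU.abs_integral_conjIntegrand_le_left hanti hα0 hα1.le ht0 ht hs0 (by linarith)
  obtain ⟨i₂, h₂⟩ := hU.abs_integral_conjIntegrand_le_middle hanti hα0 hα1.le ht0 ht hs0 hst
  obtain ⟨i₃, h₃⟩ :=
    hU.abs_integral_conjIntegrand_le_right hanti hα0 hα1.le ht0 ht hs0 (by linarith)
  obtain ⟨i₄, h₄⟩ := hU.abs_integral_conjIntegrand_le_tail hanti hα0 hα1 ht0 ht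
  refine ⟨((i₁.trans i₂).trans i₃).trans i₄, ?_⟩
  rw [← intervalIntegral.integral_add_adjacent_intervals ((i₁.trans i₂).trans i₃) i₄,
    ← intervalIntegral.integral_add_adjacent_intervals (i₁.trans i₂) i₃,
    ← intervalIntegral.integral_add_adjacent_intervals i₁ i₂]
  refine (abs_add_le _ _).trans ?_
  linarith [abs_add_le ((∫ x in 0..t - s, conjIntegrand U t x) +
      ∫ x in t - s..t + s, conjIntegrand U t x) (∫ x in t + s..2 * t, conjIntegrand U t x),
    abs_add_le (∫ x in 0..t - s, conjIntegrand U t x) (∫ x in t - s..t + s, conjIntegrand U t x)]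

end ClassU

theorem stmt15 :
    ∃ C : ℝ, 0 < C ∧
      ∀ (α : ℝ), 0 < α → α < 1 →
        ∀ (U U' : ℝ → ℝ), ClassU U →
          (∀ t ∈ Set.Ioo (0 : ℝ) Real.pi, HasDerivAt U (U' t) t) →
          (∀ t ∈ Set.Ioo (0 : ℝ) Real.pi, t * U' t ≤ α * U t) →
          ∀ t : ℝ, 0 < t → t ≤ Real.pi / 2 →
            |conjFun U t| ≤ C * (Real.sqrt α / (1 - α)) * U t := by
  refine ⟨36, by norm_num, fun α hα0 hα1 U U' hU hd hg t ht0 ht => ?_⟩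
  set s := √α * t / 2 with hs
  have hαsα : α ≤ √α := le_sqrt_self_iff.2 hα1.le
  obtain ⟨hint, hbound⟩ := hU.abs_integral_conjIntegrand_le (s := s)
    (hU.antitoneOn_div_rpow hd hg) hα0.le hα1 ht0 ht (by positivity)
    (by nlinarith [sqrt_le_one.2 hα1.le])
  have hUt : 0 ≤ U t := hU.nonneg ht0.le (by linarith)
  have hlog : α * log (t / s) ≤ 2 * √α := by
    calc α * log (t / s) ≤ α * (t / s) := by gcongr; exact log_le_self (by positivity)
      _ = 2 * (α / √α) := by rw [hs]; field_simp
      _ = 2 * √α := by rw [div_sqrt]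
  rw [hU.conjFun_eq ht0.le (by linarith) hint, abs_mul, abs_neg,
    abs_of_pos (by positivity : (0 : ℝ) < 1 / (2 * π))]
  calc 1 / (2 * π) * |∫ x in 0..π, conjIntegrand U t x|
      ≤ |∫ x in 0..π, conjIntegrand U t x| :=
        mul_le_of_le_one_left (abs_nonneg _)
          ((div_le_one (by positivity)).2 (by linarith [pi_gt_three]))
    _ ≤ 8 * α * U t * log (t / s) + 24 * s * U t / t + 8 * α * U t / (1 - α) := hbound
    _ ≤ 28 * √α * U t + 8 * √α * U t / (1 - α) := by
        have h24 : 24 * s * U t / t = 12 * √α * U t := by rw [hs]; field_simp; ring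
        have h8 : 8 * α * U t / (1 - α) ≤ 8 * √α * U t / (1 - α) := by
          gcongr
        nlinarith [mul_le_mul_of_nonneg_left hlog hUt]
    _ ≤ 28 * √α * U t / (1 - α) + 8 * √α * U t / (1 - α) := by
        gcongr
        exact le_div_self (by positivity) (by linarith) (by linarith)
    _ = 36 * (√α / (1 - α)) * U t := by ring
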